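/- arXiv:1204.5278 — 6 statements merged into one kernel-verified Lean document; each statement's English description precedes it below -/
import Mathlib

section
/- Let μ > 0 and define G_μ(k) = e^{-μ|k|}/(1+|k|)² for k ∈ ℤ. Then for all j, k ∈ ℤ, ∑_{l ∈ ℤ} G_μ(j−l)·G_μ(l−k) ≤ γ·G_μ(j−k), where γ = 4·∑_{k ∈ ℤ} (1+|k|)^{−2}. -/
/-!
The exponential factor is submultiplicative, `e^{-μ|a|} e^{-μ|b|} ≤ e^{-μ|a+b|}`, and the
polynomial factor satisfies `(1+|a+b|)² ≤ 2(1+|a|)² + 2(1+|b|)²`. Together they give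
`G_μ(a) G_μ(b) ≤ G_μ(a+b) (2(1+|a|)^{-2} + 2(1+|b|)^{-2})`. Taking `a = j - l`, `b = l - k` and
summing over `l`, each of the two terms on the right sums to `2 ∑_m (1+|m|)^{-2}` by translation
invariance of the sum over `ℤ`.
-/

/-- `G_μ(k) = e^{-μ|k|}/(1+|k|)²` for `k ∈ ℤ`. -/
noncomputable def Gmu (μ : ℝ) (k : ℤ) : ℝ :=
  Real.exp (-μ * |(k : ℝ)|) / (1 + |(k : ℝ)|) ^ 2

open Real

lemma exp_neg_mul_abs_mul_exp_le {μ : ℝ} (hμ : 0 ≤ μ) (a b : ℝ) :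
    exp (-μ * |a|) * exp (-μ * |b|) ≤ exp (-μ * |a + b|) := by
  rw [← exp_add, exp_le_exp]
  nlinarith [abs_add_le a b]

lemma one_add_abs_add_sq_le (a b : ℝ) :
    (1 + |a + b|) ^ 2 ≤ 2 * (1 + |a|) ^ 2 + 2 * (1 + |b|) ^ 2 := by
  nlinarith [abs_add_le a b, abs_nonneg a, abs_nonneg b, abs_nonneg (a + b),
    sq_nonneg (|a| - |b|)]

lemma Gmu_nonneg (μ : ℝ) (k : ℤ) : 0 ≤ Gmu μ k := by
  unfold Gmu; positivity

lemma Gmu_mul_Gmu_le {μ : ℝ} (hμ : 0 ≤ μ) (a b : ℤ) :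
    Gmu μ a * Gmu μ b ≤
      Gmu μ (a + b) * (2 / (1 + |(a : ℝ)|) ^ 2 + 2 / (1 + |(b : ℝ)|) ^ 2) := by
  have ha : 0 < (1 + |(a : ℝ)|) ^ 2 := by positivity
  have hb : 0 < (1 + |(b : ℝ)|) ^ 2 := by positivity
  have hab : 0 < (1 + |(a : ℝ) + b|) ^ 2 := by positivity
  have hpoly :
      1 ≤ (2 * (1 + |(a : ℝ)|) ^ 2 + 2 * (1 + |(b : ℝ)|) ^ 2) / (1 + |(a : ℝ) + b|) ^ 2 :=
    (one_le_div hab).mpr (one_add_abs_add_sq_le a b)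
  have hrhs : Gmu μ (a + b) * (2 / (1 + |(a : ℝ)|) ^ 2 + 2 / (1 + |(b : ℝ)|) ^ 2) =
      exp (-μ * |(a : ℝ) + b|) *
        ((2 * (1 + |(a : ℝ)|) ^ 2 + 2 * (1 + |(b : ℝ)|) ^ 2) / (1 + |(a : ℝ) + b|) ^ 2) /
        ((1 + |(a : ℝ)|) ^ 2 * (1 + |(b : ℝ)|) ^ 2) := by
    unfold Gmu; push_cast; field_simp; ring
  rw [hrhs, Gmu, Gmu, div_mul_div_comm]
  refine div_le_div_of_nonneg_right ?_ (mul_pos ha hb).le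
  exact (exp_neg_mul_abs_mul_exp_le hμ _ _).trans (le_mul_of_one_le_right (exp_pos _).le hpoly)

lemma summable_one_div_one_add_abs_sq : Summable fun m : ℤ => 1 / (1 + |(m : ℝ)|) ^ 2 := by
  have hnat : Summable fun n : ℕ => 1 / (1 + (n : ℝ)) ^ 2 := by
    refine ((summable_nat_add_iff 1).mpr (Real.summable_one_div_nat_pow.mpr one_lt_two)).congr
      fun n => ?_
    push_cast; ring
  exact .of_nat_of_neg (hnat.congr fun n => by simp) (hnat.congr fun n => by simp)

section Translation

variable {G M : Type*} [AddGroup G] [AddCommMonoid M] [TopologicalSpace M]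

lemma Summable.comp_sub_left {f : G → M} (hf : Summable f) (j : G) :
    Summable fun l => f (j - l) :=
  (Equiv.subLeft j).summable_iff.mpr hf

lemma Summable.comp_sub_right {f : G → M} (hf : Summable f) (k : G) :
    Summable fun l => f (l - k) :=
  (Equiv.subRight k).summable_iff.mpr hf

lemma tsum_comp_sub_left (f : G → M) (j : G) : ∑' l, f (j - l) = ∑' m, f m :=
  (Equiv.subLeft j).tsum_eq f

lemma tsum_comp_sub_right (f : G → M) (k : G) : ∑' l, f (l - k) = ∑' m, f m :=
  (Equiv.subRight k).tsum_eq f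

end Translation

/-- For `μ > 0` and all `j, k ∈ ℤ`,
`∑_{l ∈ ℤ} G_μ(j−l) G_μ(l−k) ≤ γ G_μ(j−k)` with `γ = 4 ∑_{k ∈ ℤ} (1+|k|)^{-2}`. -/
theorem stmt1 (μ : ℝ) (hμ : 0 < μ) (j k : ℤ) :
    ∑' l : ℤ, Gmu μ (j - l) * Gmu μ (l - k) ≤
      (4 * ∑' m : ℤ, 1 / (1 + |(m : ℝ)|) ^ 2) * Gmu μ (j - k) := by
  let w : ℤ → ℝ := fun m => 1 / (1 + |(m : ℝ)|) ^ 2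
  have hw : Summable w := summable_one_div_one_add_abs_sq
  have hwj : Summable fun l => w (j - l) := hw.comp_sub_left j
  have hwk : Summable fun l => w (l - k) := hw.comp_sub_right k
  have hbound (l : ℤ) :
      Gmu μ (j - l) * Gmu μ (l - k) ≤ Gmu μ (j - k) * (2 * w (j - l) + 2 * w (l - k)) := by
    simp only [w, mul_one_div]
    simpa only [sub_add_sub_cancel] using Gmu_mul_Gmu_le hμ.le (j - l) (l - k)
  have hmaj : Summable fun l => Gmu μ (j - k) * (2 * w (j - l) + 2 * w (l - k)) :=
    ((hwj.mul_left 2).add (hwk.mul_left 2)).mul_left _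
  calc ∑' l, Gmu μ (j - l) * Gmu μ (l - k)
      ≤ ∑' l, Gmu μ (j - k) * (2 * w (j - l) + 2 * w (l - k)) :=
        (hmaj.of_nonneg_of_le (fun l => mul_nonneg (Gmu_nonneg _ _) (Gmu_nonneg _ _))
          hbound).tsum_le_tsum hbound hmaj
    _ = (4 * ∑' m, w m) * Gmu μ (j - k) := by
        rw [tsum_mul_left, (hwj.mul_left 2).tsum_add (hwk.mul_left 2), tsum_mul_left,
          tsum_mul_left, tsum_comp_sub_left w j, tsum_comp_sub_right w k]
        ring
end

section
/- Let c > 0, μ > 0, n ∈ ℕ, and t ∈ ℝ with c|t| ≤ n·e^{−(μ+1)}. Then ∑_{k=n}^∞ (c|t|)^k/k! ≤ e^{−μ(n − (c/μ)|t|)}. -/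
/-!
The tail of the exponential series is at most its first term times `exp x`, since
`k! n! ≤ (k + n)!`. By `(n / e)^n ≤ n!` that first term is at most `(x e / n)^n`, and the
hypothesis makes the base `x e / n` at most `e^{-μ}`.
-/

open Nat Real

lemma Real.hasSum_pow_div_factorial (x : ℝ) : HasSum (fun k : ℕ => x ^ k / k !) (exp x) := by
  rw [exp_eq_exp_ℝ]
  exact NormedSpace.expSeries_div_hasSum_exp x

lemma pow_add_div_factorial_add_le {x : ℝ} (hx : 0 ≤ x) (k n : ℕ) :
    x ^ (k + n) / (k + n)! ≤ x ^ n / n ! * (x ^ k / k !) := by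
  have hdiv : (k ! * n ! : ℝ) ≤ (k + n)! := by
    exact_mod_cast Nat.le_of_dvd (factorial_pos _) (factorial_mul_factorial_dvd_factorial_add k n)
  calc x ^ (k + n) / (k + n)! ≤ x ^ (k + n) / (k ! * n !) := by gcongr
    _ = x ^ n / n ! * (x ^ k / k !) := by rw [pow_add]; ring

lemma tsum_pow_add_div_factorial_add_le {x : ℝ} (hx : 0 ≤ x) (n : ℕ) :
    ∑' k : ℕ, x ^ (k + n) / (k + n)! ≤ x ^ n / n ! * exp x := by
  have hmajorant := (hasSum_pow_div_factorial x).mul_left (x ^ n / n !)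
  have hsummable : Summable fun k : ℕ => x ^ (k + n) / (k + n)! :=
    hmajorant.summable.of_nonneg_of_le (fun _ => by positivity) (pow_add_div_factorial_add_le hx · n)
  exact hasSum_le (pow_add_div_factorial_add_le hx · n) hsummable.hasSum hmajorant

lemma pow_div_factorial_le_mul_exp_one_pow {x : ℝ} (hx : 0 ≤ x) (n : ℕ) :
    x ^ n / n ! ≤ (x / n * exp 1) ^ n := by
  have hsplit : x ^ n / n ! = (x / n) ^ n * ((n : ℝ) ^ n / n !) := by
    rcases n.eq_zero_or_pos with rfl | hn
    · simp
    · rw [mul_div_assoc', ← mul_pow, div_mul_cancel₀ x (by positivity)]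
  calc x ^ n / n ! = (x / n) ^ n * ((n : ℝ) ^ n / n !) := hsplit
    _ ≤ (x / n) ^ n * exp n := by gcongr; exact pow_div_factorial_le_exp _ n.cast_nonneg n
    _ = (x / n * exp 1) ^ n := by rw [mul_pow, ← exp_nat_mul, mul_one]

lemma pow_div_factorial_le_exp_neg_mul {x μ : ℝ} (hx : 0 ≤ x) {n : ℕ}
    (h : x ≤ n * exp (-(μ + 1))) : x ^ n / n ! ≤ exp (-μ * n) := by
  have hbase : x / n * exp 1 ≤ exp (-μ) := by
    rcases n.eq_zero_or_pos with rfl | hn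
    · simp [(exp_pos _).le]
    · rw [div_mul_eq_mul_div, div_le_iff₀ (by exact_mod_cast hn)]
      calc x * exp 1 ≤ n * exp (-(μ + 1)) * exp 1 := by gcongr
        _ = exp (-μ) * n := by rw [mul_assoc, ← exp_add]; ring_nf
  calc x ^ n / n ! ≤ (x / n * exp 1) ^ n := pow_div_factorial_le_mul_exp_one_pow hx n
    _ ≤ exp (-μ) ^ n := by gcongr
    _ = exp (-μ * n) := by rw [← exp_nat_mul]; ring_nf

/-- Stirling-type tail estimate: if `c > 0`, `μ > 0`, `n ∈ ℕ`, `t ∈ ℝ` with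
`c|t| ≤ n e^{-(μ+1)}`, then `∑_{k=n}^∞ (c|t|)^k/k! ≤ e^{-μ(n - (c/μ)|t|)}`. -/
theorem stmt4 (c μ : ℝ) (hc : 0 < c) (hμ : 0 < μ) (n : ℕ) (t : ℝ)
    (h : c * |t| ≤ (n : ℝ) * Real.exp (-(μ + 1))) :
    ∑' k : ℕ, (c * |t|) ^ (k + n) / (Nat.factorial (k + n) : ℝ) ≤
      Real.exp (-μ * ((n : ℝ) - (c / μ) * |t|)) := by
  have hx : 0 ≤ c * |t| := by positivity
  calc ∑' k : ℕ, (c * |t|) ^ (k + n) / (k + n)!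
      ≤ (c * |t|) ^ n / n ! * exp (c * |t|) := tsum_pow_add_div_factorial_add_le hx n
    _ ≤ exp (-μ * n) * exp (c * |t|) := by
        gcongr; exact pow_div_factorial_le_exp_neg_mul hx h
    _ = exp (-μ * (n - c / μ * |t|)) := by
        rw [← exp_add]; congr 1; field_simp; ring
end

section
/- For any c > 0, μ > 0, n ∈ ℕ with n ≥ 0, and any t ∈ ℝ, the tail sum satisfies ∑_{k=n}^∞ (c|t|)^k/k! ≤ e^{−μ(n − v|t|)} where v = c·(e^{μ+1} + 1/μ). -/
/-!
Write `x = c|t|`. Comparing `(k + n)! ≥ k! n!` termwise, the tail is at most `x^n/n! · e^x`, and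
trivially it is at most `e^x`. If `x e^{μ+1} ≤ n`, then `n! ≥ (n/e)^n` gives
`x^n/n! ≤ (x e^{μ+1}/n)^n e^{-μn} ≤ e^{-μn}`; otherwise `μ (x e^{μ+1} - n) ≥ 0`.
In both cases the tail is at most `exp (μ (x e^{μ+1} - n) + x)`, which is the claimed bound.
-/

open scoped Nat

namespace Real

lemma hasSum_pow_div_factorial_s5 (x : ℝ) : HasSum (fun k : ℕ => x ^ k / k !) (exp x) := by
  rw [exp_eq_exp_ℝ]
  exact NormedSpace.expSeries_div_hasSum_exp x

lemma tsum_pow_add_div_factorial_le_exp {x : ℝ} (hx : 0 ≤ x) (n : ℕ) :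
    ∑' k : ℕ, x ^ (k + n) / (k + n)! ≤ exp x := by
  have hsum := (hasSum_pow_div_factorial_s5 x).summable
  rw [← (hasSum_pow_div_factorial_s5 x).tsum_eq, ← hsum.sum_add_tsum_nat_add n]
  exact le_add_of_nonneg_left (Finset.sum_nonneg fun k _ => by positivity)

lemma tsum_pow_add_div_factorial_le_mul_exp {x : ℝ} (hx : 0 ≤ x) (n : ℕ) :
    ∑' k : ℕ, x ^ (k + n) / (k + n)! ≤ x ^ n / n ! * exp x := by
  have hsum := (hasSum_pow_div_factorial_s5 x).summable
  rw [← (hasSum_pow_div_factorial_s5 x).tsum_eq, ← tsum_mul_left]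
  refine Summable.tsum_le_tsum (fun k => ?_) ((summable_nat_add_iff n).2 hsum) (hsum.mul_left _)
  have hfac : ((k ! * n ! : ℕ) : ℝ) ≤ (k + n)! := by
    exact_mod_cast
      Nat.le_of_dvd (Nat.factorial_pos _) (Nat.factorial_mul_factorial_dvd_factorial_add k n)
  rw [div_mul_div_comm, pow_add, mul_comm (x ^ n), mul_comm (n ! : ℝ)]
  push_cast at hfac
  gcongr

lemma pow_div_factorial_le_exp_neg_mul {x μ : ℝ} {n : ℕ} (hx : 0 ≤ x)
    (h : x * exp (μ + 1) ≤ n) : x ^ n / n ! ≤ exp (-μ * n) :=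
  calc x ^ n / n ! = (x * exp (μ + 1)) ^ n / n ! * exp (-(μ + 1) * n) := by
        rw [mul_pow, ← exp_nat_mul, mul_div_right_comm, mul_assoc, ← exp_add]
        ring_nf
        simp
    _ ≤ (n : ℝ) ^ n / n ! * exp (-(μ + 1) * n) := by gcongr
    _ ≤ exp n * exp (-(μ + 1) * n) := by gcongr; exact pow_div_factorial_le_exp _ n.cast_nonneg n
    _ = exp (-μ * n) := by rw [← exp_add]; ring_nf

end Real

open Real in
/-- For any `c > 0`, `μ > 0`, `n ∈ ℕ` and `t ∈ ℝ`,
`∑_{k=n}^∞ (c|t|)^k/k! ≤ e^{-μ(n - v|t|)}` where `v = c (e^{μ+1} + 1/μ)`. -/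
theorem stmt5 (c μ : ℝ) (hc : 0 < c) (hμ : 0 < μ) (n : ℕ) (t : ℝ) :
    ∑' k : ℕ, (c * |t|) ^ (k + n) / (Nat.factorial (k + n) : ℝ) ≤
      Real.exp (-μ * ((n : ℝ) - c * (Real.exp (μ + 1) + 1 / μ) * |t|)) := by
  set x := c * |t|
  have hx : 0 ≤ x := by positivity
  have hexponent : -μ * ((n : ℝ) - c * (exp (μ + 1) + 1 / μ) * |t|) =
      μ * (x * exp (μ + 1) - n) + x := by
    field_simp
    ring
  rw [hexponent]
  rcases le_or_gt (x * exp (μ + 1)) n with hsmall | hlarge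
  · calc _ ≤ x ^ n / n ! * exp x := tsum_pow_add_div_factorial_le_mul_exp hx n
      _ ≤ exp (-μ * n) * exp x := by gcongr; exact pow_div_factorial_le_exp_neg_mul hx hsmall
      _ ≤ exp (μ * (x * exp (μ + 1) - n) + x) := by
        rw [← exp_add, exp_le_exp]
        nlinarith [mul_nonneg hμ.le (mul_nonneg hx (exp_pos (μ + 1)).le)]
  · calc _ ≤ exp x := tsum_pow_add_div_factorial_le_exp hx n
      _ ≤ exp (μ * (x * exp (μ + 1) - n) + x) := by
        gcongr
        nlinarith [mul_pos hμ (sub_pos.2 hlarge)]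
end

section
/- Let L(t) and P(t) be the Jacobi and skew-adjoint operators built from a solution (a_n(t), b_n(t)) of the Toda equations ȧ_n = a_n(b_{n+1} − b_n), ḃ_n = 2(a_n² − a_{n−1}²). Then dL/dt = [P(t), L(t)], i.e. (P,L) is a Lax pair. -/
/-
`Lop a b` depends linearly on the coefficients `(a, b)`, so `d/dt L(a, b) = L(ȧ, ḃ)`. On the
other hand a direct computation shows that the commutator `[P(a), L(a, b)]` is again a Jacobi
operator, namely `L(a_n (b_{n+1} − b_n), 2 (a_n² − a_{n−1}²))`; the Toda equations say exactly
that these coefficients are `(ȧ, ḃ)`.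
-/

/-- The Jacobi operator `(Lf)_n = a_n f_{n+1} + a_{n-1} f_{n-1} + b_n f_n`
acting formally on sequences. -/
def Lop (a b : ℤ → ℝ) (f : ℤ → ℝ) (n : ℤ) : ℝ :=
  a n * f (n + 1) + a (n - 1) * f (n - 1) + b n * f n

/-- The operator `(Pf)_n = a_n f_{n+1} − a_{n-1} f_{n-1}` acting formally on
sequences. -/
def Pop (a : ℤ → ℝ) (f : ℤ → ℝ) (n : ℤ) : ℝ :=
  a n * f (n + 1) - a (n - 1) * f (n - 1)

theorem hasDerivAt_Lop {a b : ℝ → ℤ → ℝ} {a' b' : ℤ → ℝ} {t : ℝ}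
    (ha : ∀ n, HasDerivAt (fun s => a s n) (a' n) t)
    (hb : ∀ n, HasDerivAt (fun s => b s n) (b' n) t) (f : ℤ → ℝ) (n : ℤ) :
    HasDerivAt (fun s => Lop (a s) (b s) f n) (Lop a' b' f n) t :=
  (((ha n).mul_const _).add ((ha (n - 1)).mul_const _)).add ((hb n).mul_const _)

theorem Pop_Lop_sub_Lop_Pop (a b f : ℤ → ℝ) (n : ℤ) :
    Pop a (Lop a b f) n - Lop a b (Pop a f) n =
      Lop (fun m => a m * (b (m + 1) - b m)) (fun m => 2 * (a m ^ 2 - a (m - 1) ^ 2)) f n := by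
  simp only [Lop, Pop, add_sub_cancel_right, sub_add_cancel]
  ring

theorem stmt11_general (a b : ℝ → ℤ → ℝ)
    (ha : ∀ (t : ℝ) (n : ℤ),
      HasDerivAt (fun s => a s n) (a t n * (b t (n + 1) - b t n)) t)
    (hb : ∀ (t : ℝ) (n : ℤ),
      HasDerivAt (fun s => b s n) (2 * ((a t n) ^ 2 - (a t (n - 1)) ^ 2)) t)
    (t : ℝ) (f : ℤ → ℝ) (n : ℤ) :
    HasDerivAt (fun s => Lop (a s) (b s) f n)
      (Pop (a t) (Lop (a t) (b t) f) n - Lop (a t) (b t) (Pop (a t) f) n) t := by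
  rw [Pop_Lop_sub_Lop_Pop]
  exact hasDerivAt_Lop (ha t) (hb t) f n

/-- Lax pair for the Toda lattice: if `(a_n(t), b_n(t))` is a bounded solution of
`ȧ_n = a_n (b_{n+1} − b_n)`, `ḃ_n = 2(a_n² − a_{n-1}²)`, then
`dL/dt = [P(t), L(t)] = P(t)L(t) − L(t)P(t)` (applied to any sequence `f` at any
site `n`). -/
theorem stmt11 (a b : ℝ → ℤ → ℝ)
    (hbdd : ∀ t : ℝ, ∃ C : ℝ, ∀ n : ℤ, |a t n| ≤ C ∧ |b t n| ≤ C)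
    (ha : ∀ (t : ℝ) (n : ℤ),
      HasDerivAt (fun s => a s n) (a t n * (b t (n + 1) - b t n)) t)
    (hb : ∀ (t : ℝ) (n : ℤ),
      HasDerivAt (fun s => b s n) (2 * ((a t n) ^ 2 - (a t (n - 1)) ^ 2)) t)
    (t : ℝ) (f : ℤ → ℝ) (n : ℤ) :
    HasDerivAt (fun s => Lop (a s) (b s) f n)
      (Pop (a t) (Lop (a t) (b t) f) n - Lop (a t) (b t) (Pop (a t) f) n) t :=
  stmt11_general a b ha hb t f n
end

section
/- Let κ > 0 and define f(x,t) = 1 + exp(−2κx + 2 sinh(κ)t). For the one-soliton Toda solution a_n(t) = (1/2)·√(f(n−1,t)f(n+1,t))/f(n,t) and b_n(t) = (1/2)(f'(n,t)/f(n,t) − f'(n−1,t)/f(n−1,t)) (with ' = ∂/∂t), at t = 0 one has sup_n a_n(0) = a_0(0) = cosh(κ)/2 and sup_n |b_n(0)| = |b_0(0)| = sinh(κ)tanh(κ)/2. -/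
/-!
At `t = 0` one has `f(x, 0) = 2 e^{-κx} cosh(κx)`, so the exponential factors cancel in `a_n`,
and `cosh(y + κ) cosh(y - κ) = cosh² y + sinh² κ` gives
`a_n(0) = √(cosh²(κn) + sinh² κ) / (2 cosh(κn))`, which is at most `cosh κ / 2` because
`cosh(κn) ≥ 1`. Likewise `f'/f = sinh κ (1 - tanh(κx))`, and the difference of two `tanh` values
gives `b_n(0) = -sinh² κ / (2 cosh(κn) cosh(κ(n-1)))`. One of the integers `n`, `n - 1` is
nonzero, so the denominator is at least `2 cosh κ`. Both bounds are attained at `n = 0`.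
-/

/-- `f(x,t) = 1 + exp(−2κx + 2 sinh(κ) t)` for the one-soliton Toda solution. -/
noncomputable def solF (κ x t : ℝ) : ℝ :=
  1 + Real.exp (-2 * κ * x + 2 * Real.sinh κ * t)

/-- `∂f/∂t`. -/
noncomputable def solF' (κ x t : ℝ) : ℝ :=
  2 * Real.sinh κ * Real.exp (-2 * κ * x + 2 * Real.sinh κ * t)

/-- The Flaschka coefficient `a_n(t)` of the one-soliton Toda solution. -/
noncomputable def solA (κ : ℝ) (n : ℤ) (t : ℝ) : ℝ :=
  (1 / 2) * Real.sqrt (solF κ ((n : ℝ) - 1) t * solF κ ((n : ℝ) + 1) t) / solF κ (n : ℝ) t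

/-- The Flaschka coefficient `b_n(t)` of the one-soliton Toda solution. -/
noncomputable def solB (κ : ℝ) (n : ℤ) (t : ℝ) : ℝ :=
  (1 / 2) * (solF' κ (n : ℝ) t / solF κ (n : ℝ) t
    - solF' κ ((n : ℝ) - 1) t / solF κ ((n : ℝ) - 1) t)

open Real

namespace Real

theorem exp_neg_two_mul_mul (x y : ℝ) : exp (-2 * x * y) = exp (-(x * y)) ^ 2 := by
  rw [sq, ← exp_add]
  ring_nf

theorem sinh_mul_tanh_div_two (x : ℝ) : sinh x * tanh x / 2 = sinh x ^ 2 / (2 * cosh x) := by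
  rw [tanh_eq_sinh_div_cosh]
  field_simp

theorem cosh_add_mul_cosh_sub (x y : ℝ) :
    cosh (x + y) * cosh (x - y) = cosh x ^ 2 + sinh y ^ 2 := by
  rw [cosh_add, cosh_sub]
  linear_combination cosh x ^ 2 * cosh_sq y + sinh y ^ 2 * cosh_sq x

theorem tanh_sub_tanh (x y : ℝ) : tanh x - tanh y = sinh (x - y) / (cosh x * cosh y) := by
  rw [tanh_eq_sinh_div_cosh, tanh_eq_sinh_div_cosh, div_sub_div _ _ (cosh_pos x).ne'
    (cosh_pos y).ne', sinh_sub]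

theorem cosh_le_cosh_mul_intCast (x : ℝ) {m : ℤ} (hm : m ≠ 0) : cosh x ≤ cosh (x * m) := by
  rw [cosh_le_cosh, abs_mul]
  exact le_mul_of_one_le_right (abs_nonneg x) (by exact_mod_cast Int.one_le_abs hm)

theorem cosh_le_cosh_mul_intCast_mul_cosh_mul_sub_one (x : ℝ) (n : ℤ) :
    cosh x ≤ cosh (x * n) * cosh (x * (n - 1)) := by
  rcases eq_or_ne n 0 with rfl | hn
  · simp
  · calc cosh x ≤ cosh (x * n) := cosh_le_cosh_mul_intCast x hn
      _ ≤ cosh (x * n) * cosh (x * (n - 1)) :=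
        le_mul_of_one_le_right (cosh_pos _).le (one_le_cosh _)

end Real

theorem solF_zero (κ x : ℝ) : solF κ x 0 = 2 * exp (-(κ * x)) * cosh (κ * x) := by
  have h : exp (-(κ * x)) * exp (κ * x) = 1 := by rw [← exp_add, neg_add_cancel, exp_zero]
  rw [solF, mul_zero, add_zero, exp_neg_two_mul_mul, cosh_eq]
  linear_combination -h

theorem solF'_div_solF_zero (κ x : ℝ) :
    solF' κ x 0 / solF κ x 0 = sinh κ * (1 - tanh (κ * x)) := by
  rw [solF_zero, solF', mul_zero, add_zero, exp_neg_two_mul_mul, tanh_eq_sinh_div_cosh,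
    one_sub_div (cosh_pos _).ne', cosh_sub_sinh]
  field_simp

theorem solA_zero (κ : ℝ) (n : ℤ) :
    solA κ n 0 = √(cosh (κ * n) ^ 2 + sinh κ ^ 2) / (2 * cosh (κ * n)) := by
  have hprod : solF κ (n - 1) 0 * solF κ (n + 1) 0 =
      (2 * exp (-(κ * n))) ^ 2 * (cosh (κ * n) ^ 2 + sinh κ ^ 2) := by
    have hexp : exp (-(κ * (n - 1))) * exp (-(κ * (n + 1))) = exp (-(κ * n)) ^ 2 := by
      rw [sq, ← exp_add, ← exp_add]
      ring_nf
    rw [solF_zero, solF_zero, ← cosh_add_mul_cosh_sub, mul_pow, ← hexp, mul_add, mul_sub,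
      mul_one]
    ring
  rw [solA, hprod, sqrt_mul (by positivity), sqrt_sq (by positivity), solF_zero]
  field_simp

theorem solB_zero (κ : ℝ) (n : ℤ) :
    solB κ n 0 = -(sinh κ ^ 2 / (2 * (cosh (κ * n) * cosh (κ * (n - 1))))) := by
  have htanh := tanh_sub_tanh (κ * (n - 1)) (κ * n)
  rw [show κ * (n - 1) - κ * n = -κ by ring, sinh_neg] at htanh
  rw [solB, solF'_div_solF_zero, solF'_div_solF_zero]
  linear_combination (sinh κ / 2) * htanh

theorem solA_zero_le (κ : ℝ) (n : ℤ) : solA κ n 0 ≤ cosh κ / 2 := by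
  have hc := one_le_cosh (κ * n)
  have hsqrt : √(cosh (κ * n) ^ 2 + sinh κ ^ 2) ≤ cosh κ * cosh (κ * n) := by
    refine sqrt_le_iff.mpr ⟨by positivity, ?_⟩
    have hc2 : 0 ≤ cosh (κ * n) ^ 2 - 1 := by nlinarith
    nlinarith [cosh_sq κ, mul_nonneg (sq_nonneg (sinh κ)) hc2]
  calc solA κ n 0 ≤ cosh κ * cosh (κ * n) / (2 * cosh (κ * n)) := by
        rw [solA_zero]; gcongr
    _ = cosh κ / 2 := by field_simp

theorem solA_zero_zero (κ : ℝ) : solA κ 0 0 = cosh κ / 2 := by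
  simp only [solA_zero, Int.cast_zero, mul_zero, cosh_zero]
  rw [one_pow, add_comm, ← cosh_sq, sqrt_sq (cosh_pos κ).le, mul_one]

theorem abs_solB_zero (κ : ℝ) (n : ℤ) :
    |solB κ n 0| = sinh κ ^ 2 / (2 * (cosh (κ * n) * cosh (κ * (n - 1)))) := by
  rw [solB_zero, abs_neg, abs_of_nonneg (by positivity)]

theorem abs_solB_zero_le (κ : ℝ) (n : ℤ) : |solB κ n 0| ≤ sinh κ * tanh κ / 2 := by
  rw [abs_solB_zero, sinh_mul_tanh_div_two]
  gcongr
  exact cosh_le_cosh_mul_intCast_mul_cosh_mul_sub_one κ n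

theorem abs_solB_zero_zero (κ : ℝ) : |solB κ 0 0| = sinh κ * tanh κ / 2 := by
  simp [abs_solB_zero, sinh_mul_tanh_div_two]

theorem stmt13_general (κ : ℝ) :
    (∀ n : ℤ, solA κ n 0 ≤ Real.cosh κ / 2) ∧
    solA κ 0 0 = Real.cosh κ / 2 ∧
    (∀ n : ℤ, |solB κ n 0| ≤ Real.sinh κ * Real.tanh κ / 2) ∧
    |solB κ 0 0| = Real.sinh κ * Real.tanh κ / 2 :=
  ⟨solA_zero_le κ, solA_zero_zero κ, abs_solB_zero_le κ, abs_solB_zero_zero κ⟩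

/-- For the one-soliton with `κ > 0`: at `t = 0`,
`sup_n a_n(0) = a_0(0) = cosh(κ)/2` and `sup_n |b_n(0)| = |b_0(0)| = sinh(κ)tanh(κ)/2`. -/
theorem stmt13 (κ : ℝ) (hκ : 0 < κ) :
    (∀ n : ℤ, solA κ n 0 ≤ Real.cosh κ / 2) ∧
    solA κ 0 0 = Real.cosh κ / 2 ∧
    (∀ n : ℤ, |solB κ n 0| ≤ Real.sinh κ * Real.tanh κ / 2) ∧
    |solB κ 0 0| = Real.sinh κ * Real.tanh κ / 2 :=
  stmt13_general κ
end

section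
/- For j ≥ 0 the quantity η^{(j+1)} = ⟨δ_n, (S⁺ + S⁻ + I)^{j+1} δ_n⟩ = ∑_{k even, 0≤k≤j+1} C(j+1,k)·C(k,k/2) and ξ^{(j+1)} = ⟨δ_{n+1}, (S⁺ + S⁻ + I)^{j+1} δ_n⟩ = ∑_{k odd, 0≤k≤j+1} C(j+1,k)·C(k,(k+1)/2) satisfy η^{(j+1)} ≤ 2·ξ^{(j+1)} and ξ^{(j+1)} ≤ 3^j. -/
/-- Right shift `(S⁺ f)_n = f_{n+1}` as a linear endomorphism of sequences. -/
def Splus : (ℤ → ℝ) →ₗ[ℝ] (ℤ → ℝ) where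
  toFun f := fun n => f (n + 1)
  map_add' _ _ := rfl
  map_smul' _ _ := rfl

/-- Left shift `(S⁻ f)_n = f_{n-1}` as a linear endomorphism of sequences. -/
def Sminus : (ℤ → ℝ) →ₗ[ℝ] (ℤ → ℝ) where
  toFun f := fun n => f (n - 1)
  map_add' _ _ := rfl
  map_smul' _ _ := rfl

/-- The standard basis vector `δ_n`. -/
def deltaZ (n : ℤ) : ℤ → ℝ := fun m => if m = n then 1 else 0

/-!
Since `S⁺` and `S⁻` commute, the binomial theorem expands `T^m = (S⁻ + S⁺ + I)^m` as
`∑ C(m,k) C(k,i) (S⁻)^i (S⁺)^(k-i)`, and the `(k, i)` term sends `δ_n` to a sequence which is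
nonzero at `n + d` exactly when `2i = k + d`; this gives both closed forms.

For the inequalities put `F = T^j δ_n`, which is nonnegative and symmetric about `n`. Then
`η = F(n+1) + F(n-1) + F(n) = 2F(n+1) + F(n)` and `ξ = F(n) + F(n+1) + F(n+2)`, whence `η ≤ 2ξ`.
Any sum of three consecutive values of `T f` is the sum of three such sums of `f`, so these sums
grow at most by a factor `3` under `T`; for `δ_n` they are at most `1`, hence `ξ ≤ 3^j`.
-/

open Finset

theorem sum_choose_ite_two_mul_eq (k d : ℕ) :
    (∑ i ∈ range (k + 1), if 2 * i = k + d then k.choose i else 0) =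
      if Even (k + d) then k.choose ((k + d) / 2) else 0 := by
  split_ifs with h
  · obtain ⟨r, hr⟩ := h
    have hcond : ∀ i, 2 * i = k + d ↔ r = i := fun i => by omega
    simp only [hcond, sum_ite_eq, mem_range]
    rw [show (k + d) / 2 = r by omega]
    split_ifs with hr'
    · rfl
    · exact (Nat.choose_eq_zero_of_lt (by omega)).symm
  · refine sum_eq_zero fun i _ => if_neg fun hi => h ⟨i, by omega⟩

theorem Splus_pow_apply (a : ℕ) (f : ℤ → ℝ) (p : ℤ) : (Splus ^ a) f p = f (p + a) := by
  induction a generalizing p with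
  | zero => simp
  | succ a ih =>
    rw [pow_succ', Module.End.mul_apply]
    change (Splus ^ a) f (p + 1) = _
    rw [ih]; push_cast; ring_nf

theorem Sminus_pow_apply (b : ℕ) (f : ℤ → ℝ) (p : ℤ) : (Sminus ^ b) f p = f (p - b) := by
  induction b generalizing p with
  | zero => simp
  | succ b ih =>
    rw [pow_succ', Module.End.mul_apply]
    change (Sminus ^ b) f (p - 1) = _
    rw [ih]; push_cast; ring_nf

theorem commute_Sminus_Splus : Commute Sminus Splus := by
  ext f p
  change f (p - 1 + 1) = f (p + 1 - 1)
  ring_nf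

abbrev walkOp : Module.End ℝ (ℤ → ℝ) := Splus + Sminus + LinearMap.id

theorem walkOp_apply (f : ℤ → ℝ) (p : ℤ) : walkOp f p = f (p + 1) + f (p - 1) + f p := rfl

theorem walkOp_pow_apply (m : ℕ) (f : ℤ → ℝ) (p : ℤ) :
    (walkOp ^ m) f p = ∑ k ∈ range (m + 1), (m.choose k : ℝ) *
      ∑ i ∈ range (k + 1), (k.choose i : ℝ) * f (p - i + (k - i : ℕ)) := by
  have hT : walkOp = (Sminus + Splus) + 1 := by rw [walkOp, add_comm Splus, Module.End.one_eq_id]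
  rw [hT, (Commute.one_right _).add_pow]
  simp only [commute_Sminus_Splus.add_pow, one_pow, mul_one, sum_mul, LinearMap.sum_apply,
    Finset.sum_apply, Module.End.mul_apply, Module.End.natCast_apply, Sminus_pow_apply,
    Splus_pow_apply, mul_sum]
  refine sum_congr rfl fun k _ => sum_congr rfl fun i _ => ?_
  simp only [Pi.smul_apply, nsmul_eq_mul, Pi.mul_apply, Pi.natCast_apply]
  ring

theorem walkOp_pow_deltaZ_apply (m d : ℕ) (n : ℤ) :
    (walkOp ^ m) (deltaZ n) (n + d) = ((∑ k ∈ range (m + 1),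
      if Even (k + d) then m.choose k * k.choose ((k + d) / 2) else 0 : ℕ) : ℝ) := by
  rw [walkOp_pow_apply, Nat.cast_sum]
  refine sum_congr rfl fun k _ => ?_
  rw [← mul_ite_zero, Nat.cast_mul, ← sum_choose_ite_two_mul_eq, Nat.cast_sum]
  congr 1
  refine sum_congr rfl fun i hi => ?_
  have hik : i ≤ k := Nat.lt_succ_iff.mp (mem_range.mp hi)
  simp only [deltaZ, mul_ite, mul_one, mul_zero, Nat.cast_ite, Nat.cast_zero]
  congr 1
  apply propext
  omega

theorem walkOp_pow_succ_apply (m : ℕ) (f : ℤ → ℝ) (p : ℤ) :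
    (walkOp ^ (m + 1)) f p =
      (walkOp ^ m) f (p + 1) + (walkOp ^ m) f (p - 1) + (walkOp ^ m) f p := by
  rw [pow_succ', Module.End.mul_apply, walkOp_apply]

theorem walkOp_pow_nonneg {f : ℤ → ℝ} (hf : 0 ≤ f) (m : ℕ) : 0 ≤ (walkOp ^ m) f := by
  induction m with
  | zero => simpa using hf
  | succ m ih =>
    intro p
    rw [walkOp_pow_succ_apply]
    exact add_nonneg (add_nonneg (ih _) (ih _)) (ih _)

theorem walkOp_pow_symm {f : ℤ → ℝ} {c : ℤ} (hf : ∀ d, f (c - d) = f (c + d)) (m : ℕ) (d : ℤ) :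
    (walkOp ^ m) f (c - d) = (walkOp ^ m) f (c + d) := by
  induction m generalizing d with
  | zero => exact hf d
  | succ m ih =>
    rw [walkOp_pow_succ_apply, walkOp_pow_succ_apply, show c - d + 1 = c - (d - 1) by ring,
      show c - d - 1 = c - (d + 1) by ring, ih, ih, ih, show c + (d - 1) = c + d - 1 by ring,
      show c + (d + 1) = c + d + 1 by ring]
    ring

theorem walkOp_pow_window_le {f : ℤ → ℝ} {C : ℝ} (hf : ∀ p, f p + f (p + 1) + f (p + 2) ≤ C)
    (m : ℕ) (p : ℤ) :
    (walkOp ^ m) f p + (walkOp ^ m) f (p + 1) + (walkOp ^ m) f (p + 2) ≤ 3 ^ m * C := by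
  induction m generalizing p with
  | zero => simpa using hf p
  | succ m ih =>
    have h₁ := ih (p - 1)
    have h₂ := ih p
    have h₃ := ih (p + 1)
    simp only [walkOp_pow_succ_apply]
    ring_nf at h₁ h₂ h₃ ⊢
    linarith

theorem deltaZ_nonneg (n : ℤ) : 0 ≤ deltaZ n := fun p => by
  unfold deltaZ; split_ifs <;> norm_num

theorem deltaZ_symm (n d : ℤ) : deltaZ n (n - d) = deltaZ n (n + d) := by
  simp only [deltaZ, sub_eq_self, add_eq_left]

theorem deltaZ_window_le (n p : ℤ) : deltaZ n p + deltaZ n (p + 1) + deltaZ n (p + 2) ≤ 1 := by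
  simp only [deltaZ]
  split_ifs <;> first | omega | norm_num

/-- With `T = S⁺ + S⁻ + I` on sequences over `ℤ`:
`η^{(j+1)} = ⟨δ_n, T^{j+1} δ_n⟩ = ∑_{k even} C(j+1,k) C(k,k/2)`,
`ξ^{(j+1)} = ⟨δ_{n+1}, T^{j+1} δ_n⟩ = ∑_{k odd} C(j+1,k) C(k,(k+1)/2)`,
and `η^{(j+1)} ≤ 2 ξ^{(j+1)}`, `ξ^{(j+1)} ≤ 3^j`. -/
theorem stmt15 (j : ℕ) (n : ℤ) :
    let T : (ℤ → ℝ) →ₗ[ℝ] (ℤ → ℝ) := Splus + Sminus + LinearMap.id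
    let η : ℕ := ∑ k ∈ Finset.range (j + 2),
      if Even k then Nat.choose (j + 1) k * Nat.choose k (k / 2) else 0
    let ξ : ℕ := ∑ k ∈ Finset.range (j + 2),
      if Odd k then Nat.choose (j + 1) k * Nat.choose k ((k + 1) / 2) else 0
    (T ^ (j + 1)) (deltaZ n) n = (η : ℝ) ∧
    (T ^ (j + 1)) (deltaZ n) (n + 1) = (ξ : ℝ) ∧
    η ≤ 2 * ξ ∧ ξ ≤ 3 ^ j := by
  intro T η ξ
  have hη : (T ^ (j + 1)) (deltaZ n) n = η := by
    have h := walkOp_pow_deltaZ_apply (j + 1) 0 n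
    simp only [Nat.cast_zero, add_zero] at h
    exact h
  have hξ : (T ^ (j + 1)) (deltaZ n) (n + 1) = ξ := by
    have h := walkOp_pow_deltaZ_apply (j + 1) 1 n
    simp only [Nat.cast_one, Nat.even_add_one, Nat.not_even_iff_odd] at h
    exact h
  set F := (T ^ j) (deltaZ n)
  have hF₀ : 0 ≤ F n := walkOp_pow_nonneg (deltaZ_nonneg n) j n
  have hF₂ : 0 ≤ F (n + 2) := walkOp_pow_nonneg (deltaZ_nonneg n) j (n + 2)
  have hFsymm : F (n - 1) = F (n + 1) := walkOp_pow_symm (deltaZ_symm n) j 1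
  have hηF : (η : ℝ) = F (n + 1) + F (n - 1) + F n := by
    rw [← hη, walkOp_pow_succ_apply]
  have hξF : (ξ : ℝ) = F (n + 2) + F n + F (n + 1) := by
    rw [← hξ, walkOp_pow_succ_apply, add_sub_cancel_right, add_assoc n 1 1]; rfl
  refine ⟨hη, hξ, ?_, ?_⟩
  · exact_mod_cast (show (η : ℝ) ≤ 2 * ξ by linarith)
  · have hW := walkOp_pow_window_le (deltaZ_window_le n) j n
    exact_mod_cast (show (ξ : ℝ) ≤ 3 ^ j by linarith)
end
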